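/- arXiv:math/0308033 — 5 statements merged into one kernel-verified Lean document; each statement's English description precedes it below -/
import Mathlib

section
/- An irreducible root system R cannot be contained in the union of two proper linear subspaces of the span of R. That is, if V and W are subspaces of Span(R) with R ⊆ V ∪ W, then V = Span(R) or W = Span(R). -/
/-!
If `V` is a proper subspace, the roots outside `V` already span `E`: when `α ∈ V` is not
orthogonal to a root `β ∉ V`, the reflection `s_α β = β - c α` (with `c ≠ 0`) is again a root
outside `V`, so `α ∈ span {β, s_α β}`. Hence the roots in `span (R \ V)` and the remaining
roots are mutually orthogonal, and irreducibility puts all of `R` in `span (R \ V)`. Since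
`R \ V ⊆ W`, this forces `W = E`.
-/

open scoped RealInnerProductSpace

/-- A (reduced) root system: a finite nonempty set of nonzero vectors in a real inner
product space, closed under negation and reflections, with integrality, and reduced. -/
structure IsRootSystem {E : Type*} [NormedAddCommGroup E] [InnerProductSpace ℝ E]
    (R : Set E) : Prop where
  finite : R.Finite
  nonempty : R.Nonempty
  ne_zero : ∀ α ∈ R, α ≠ 0
  neg_mem : ∀ α ∈ R, -α ∈ R
  reduced : ∀ α ∈ R, ∀ t : ℝ, t • α ∈ R → t = 1 ∨ t = -1
  reflect_mem : ∀ α ∈ R, ∀ β ∈ R, β - (2 * ⟪β, α⟫ / ⟪α, α⟫) • α ∈ R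
  integral : ∀ α ∈ R, ∀ β ∈ R, ∃ n : ℤ, 2 * ⟪β, α⟫ / ⟪α, α⟫ = (n : ℝ)

/-- Irreducibility: `R` admits no decomposition into two nonempty mutually
orthogonal parts. -/
def IsIrreducibleRS {E : Type*} [NormedAddCommGroup E] [InnerProductSpace ℝ E]
    (R : Set E) : Prop :=
  ∀ R₁ R₂ : Set E, R₁ ∪ R₂ = R → R₁.Nonempty → R₂.Nonempty →
    ¬ (∀ α ∈ R₁, ∀ β ∈ R₂, ⟪α, β⟫ = 0)

section

open Submodule

variable {E : Type*} [NormedAddCommGroup E] [InnerProductSpace ℝ E] {R : Set E}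

theorem mem_span_diff_of_inner_ne_zero
    (hrefl : ∀ α ∈ R, ∀ β ∈ R, β - (2 * ⟪β, α⟫ / ⟪α, α⟫) • α ∈ R)
    (V : Submodule ℝ E) {α β : E} (hα : α ∈ R) (hβ : β ∈ R) (hβV : β ∉ V)
    (hβα : ⟪β, α⟫ ≠ 0) : α ∈ span ℝ (R \ V) := by
  by_cases hαV : α ∈ V
  · set c := 2 * ⟪β, α⟫ / ⟪α, α⟫
    have hα0 : α ≠ 0 := by rintro rfl; simp at hβα
    have hc : c ≠ 0 := div_ne_zero (mul_ne_zero two_ne_zero hβα) (by simpa using hα0)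
    have hrefl_mem : β - c • α ∈ R \ V :=
      ⟨hrefl α hα β hβ, fun h => hβV (by simpa using V.add_mem h (V.smul_mem c hαV))⟩
    have hα_eq : α = c⁻¹ • (β - (β - c • α)) := by simp [smul_smul, hc]
    rw [hα_eq]
    exact smul_mem _ _ (sub_mem (subset_span ⟨hβ, hβV⟩) (subset_span hrefl_mem))
  · exact subset_span ⟨hα, hαV⟩

theorem IsIrreducibleRS.subset_span_of_inner_ne_zero {S : Set E} (hirr : IsIrreducibleRS R)
    (hSR : S ⊆ R) (hS : S.Nonempty)
    (hS_closed : ∀ α ∈ R, ∀ β ∈ S, ⟪β, α⟫ ≠ 0 → α ∈ span ℝ S) :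
    R ⊆ span ℝ S := by
  by_contra hRS
  obtain ⟨β, hβ⟩ := hS
  refine hirr (R ∩ span ℝ S) (R \ span ℝ S) (Set.inter_union_sdiff _ _)
    ⟨β, hSR hβ, subset_span hβ⟩ (Set.not_subset.mp hRS) ?_
  rintro α ⟨-, hαS⟩ γ ⟨hγ, hγS⟩
  have hS_perp : span ℝ S ≤ (ℝ ∙ γ)ᗮ := span_le.mpr fun δ hδ =>
    mem_orthogonal_singleton_iff_inner_left.mpr
      (by_contra fun h => hγS (hS_closed γ hγ δ hδ h))
  exact mem_orthogonal_singleton_iff_inner_left.mp (hS_perp hαS)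

theorem IsIrreducibleRS.span_diff_eq_top (hirr : IsIrreducibleRS R)
    (hrefl : ∀ α ∈ R, ∀ β ∈ R, β - (2 * ⟪β, α⟫ / ⟪α, α⟫) • α ∈ R)
    (hspan : span ℝ R = ⊤) {V : Submodule ℝ E} (hV : V ≠ ⊤) :
    span ℝ (R \ V) = ⊤ := by
  have hne : (R \ V).Nonempty := by
    rw [Set.nonempty_iff_ne_empty, Ne, Set.sdiff_eq_empty]
    exact fun hRV => hV (top_unique (hspan ▸ span_le.mpr hRV))
  refine top_unique (hspan ▸ span_le.mpr
    (hirr.subset_span_of_inner_ne_zero Set.sdiff_subset hne ?_))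
  rintro α hα β ⟨hβ, hβV⟩ hβα
  exact mem_span_diff_of_inner_ne_zero hrefl V hα hβ hβV hβα

end

/-- An irreducible root system cannot be contained in the union of two proper
subspaces of its span. -/
theorem irreducible_not_in_union_of_proper_subspaces
    {E : Type*} [NormedAddCommGroup E] [InnerProductSpace ℝ E]
    (R : Set E) (hR : IsRootSystem R) (hirr : IsIrreducibleRS R)
    (hspan : Submodule.span ℝ R = ⊤)
    (V W : Submodule ℝ E) (hVW : R ⊆ (V : Set E) ∪ (W : Set E)) :
    V = ⊤ ∨ W = ⊤ := by
  refine or_iff_not_imp_left.mpr fun hV => top_unique ?_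
  rw [← hirr.span_diff_eq_top hR.reflect_mem hspan hV, Submodule.span_le]
  exact fun α ⟨hα, hαV⟩ => (hVW hα).resolve_left hαV
end

section
/- If R is an irreducible root system spanning a Euclidean space E and Q is a quadratic form on E with Q(α) = 0 for every root α ∈ R, then Q is identically zero. -/
open scoped RealInnerProductSpace

/-!
The polar form `B` of `Q` vanishes on all pairs of roots. If `⟪α, β⟫ ≠ 0`, then
`0 = Q (s_α β) = Q (β - c α) = -c B(β, α)` with `c ≠ 0`. For orthogonal roots one propagates
along the root system: for fixed `β`, the roots `γ` such that `B(·, β)` vanishes on every root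
not orthogonal to `γ` contain `β` and are closed under passing to non-orthogonal roots, hence,
by irreducibility, are all of `R`. Since `R` spans `E`, `B = 0`, so `Q = B(x, x) / 2 = 0`.
-/

open QuadraticMap

namespace QuadraticMap

theorem polar_eq_zero_of_map_sub_smul_eq_zero {K M : Type*} [Field K] [AddCommGroup M]
    [Module K M] (Q : QuadraticForm K M) {x y : M} {c : K} (hc : c ≠ 0) (hx : Q x = 0)
    (hy : Q y = 0) (hyx : Q (y - c • x) = 0) : polar Q y x = 0 := by
  rw [sub_eq_add_neg, QuadraticMap.map_add Q, ← neg_smul, QuadraticMap.map_smul,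
    polar_smul_right, hx, hy, smul_eq_mul, smul_eq_mul,
    mul_zero, zero_add, zero_add, neg_mul, neg_eq_zero] at hyx
  exact (mul_eq_zero.mp hyx).resolve_left hc

theorem eq_zero_of_polar_eq_zero_on_span {K M : Type*} [Field K] [NeZero (2 : K)]
    [AddCommGroup M] [Module K M] (Q : QuadraticForm K M) {s : Set M}
    (hs : Submodule.span K s = ⊤) (h : ∀ x ∈ s, ∀ y ∈ s, polar Q x y = 0) : Q = 0 := by
  have hB : polarBilin Q = polarBilin 0 :=
    LinearMap.ext_on hs fun x hx => LinearMap.ext_on hs fun y hy => by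
      simpa [polar] using h x hx y hy
  exact polarBilin_injective (IsUnit.mk0 2 two_ne_zero) hB

end QuadraticMap

section RootSystem

variable {E : Type*} [NormedAddCommGroup E] [InnerProductSpace ℝ E] {R : Set E}

theorem IsIrreducibleRS.eq_of_closed_under_nonorthogonal (hirr : IsIrreducibleRS R) {S : Set E}
    (hSR : S ⊆ R) (hS : S.Nonempty) (hclosed : ∀ γ ∈ S, ∀ δ ∈ R, ⟪γ, δ⟫ ≠ 0 → δ ∈ S) :
    S = R := by
  by_contra hne
  obtain ⟨δ, hδR, hδS⟩ := Set.exists_of_ssubset (hSR.ssubset_of_ne hne)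
  refine hirr S (R \ S) (Set.union_sdiff_cancel hSR) hS ⟨δ, hδR, hδS⟩ ?_
  rintro γ hγ δ ⟨hδR, hδS⟩
  by_contra hγδ
  exact hδS (hclosed γ hγ δ hδR hγδ)

namespace IsRootSystem

theorem inner_self_ne_zero (hR : IsRootSystem R) {α : E} (hα : α ∈ R) : ⟪α, α⟫ ≠ 0 :=
  _root_.inner_self_ne_zero.mpr (hR.ne_zero α hα)

theorem reflect_coeff_ne_zero (hR : IsRootSystem R) {α β : E} (hα : α ∈ R) (hβα : ⟪β, α⟫ ≠ 0) :
    2 * ⟪β, α⟫ / ⟪α, α⟫ ≠ 0 :=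
  div_ne_zero (mul_ne_zero two_ne_zero hβα) (hR.inner_self_ne_zero hα)

variable {Q : QuadraticForm ℝ E}

theorem polar_eq_zero_of_inner_ne_zero (hR : IsRootSystem R) (hQ : ∀ α ∈ R, Q α = 0)
    {α β : E} (hα : α ∈ R) (hβ : β ∈ R) (hβα : ⟪β, α⟫ ≠ 0) : polar Q β α = 0 :=
  polar_eq_zero_of_map_sub_smul_eq_zero Q (hR.reflect_coeff_ne_zero hα hβα) (hQ α hα) (hQ β hβ)
    (hQ _ (hR.reflect_mem α hα β hβ))

theorem polar_eq_zero (hR : IsRootSystem R) (hirr : IsIrreducibleRS R) (hQ : ∀ α ∈ R, Q α = 0)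
    {α β : E} (hα : α ∈ R) (hβ : β ∈ R) : polar Q α β = 0 := by
  set S : Set E := {γ ∈ R | ∀ α ∈ R, ⟪α, γ⟫ ≠ 0 → polar Q α β = 0}
  have hβS : β ∈ S := ⟨hβ, fun α hα hαβ => hR.polar_eq_zero_of_inner_ne_zero hQ hβ hα hαβ⟩
  have hclosed : ∀ γ ∈ S, ∀ δ ∈ R, ⟪γ, δ⟫ ≠ 0 → δ ∈ S := by
    rintro γ ⟨hγ, hγS⟩ δ hδ hγδ
    have hδβ : polar Q δ β = 0 := hγS δ hδ (by rwa [real_inner_comm])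
    refine ⟨hδ, fun α hα hαδ => ?_⟩
    by_cases hαγ : ⟪α, γ⟫ = 0
    · -- `s_δ α` is not orthogonal to `γ`, and `α` is a combination of `s_δ α` and `δ`.
      set c := 2 * ⟪α, δ⟫ / ⟪δ, δ⟫
      have hsγ : ⟪α - c • δ, γ⟫ ≠ 0 := by
        rw [inner_sub_left, real_inner_smul_left, hαγ, zero_sub, neg_ne_zero, real_inner_comm]
        exact mul_ne_zero (hR.reflect_coeff_ne_zero hδ hαδ) hγδ
      have hs := hγS _ (hR.reflect_mem δ hδ α hα) hsγ
      rwa [polar_sub_left, polar_smul_left, hδβ, smul_zero, sub_zero] at hs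
    · exact hγS α hα hαγ
  have hSeq := hirr.eq_of_closed_under_nonorthogonal (fun _ h => h.1) ⟨β, hβS⟩ hclosed
  exact (hSeq ▸ hα : α ∈ S).2 α hα (hR.inner_self_ne_zero hα)

end IsRootSystem

end RootSystem

/-- A quadratic form vanishing on all roots of an irreducible root system spanning `E`
vanishes identically. -/
theorem quadraticForm_eq_zero_of_vanishing_on_roots
    {E : Type*} [NormedAddCommGroup E] [InnerProductSpace ℝ E]
    (R : Set E) (hR : IsRootSystem R) (hirr : IsIrreducibleRS R)
    (hspan : Submodule.span ℝ R = ⊤)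
    (Q : QuadraticForm ℝ E) (hQ : ∀ α ∈ R, Q α = 0) :
    Q = 0 :=
  Q.eq_zero_of_polar_eq_zero_on_span hspan fun _ hα _ hβ => hR.polar_eq_zero hirr hQ hα hβ
end

section
/- Let f(x) = aQ(x)/(bR(x)) be a non-constant rational function over ℚ with a, b coprime integers and Q, R monic integer polynomials with gcd(Q,R)=1. Then the height of f(n) (the maximum of the absolute values of the numerator and denominator of f(n) in lowest terms) tends to infinity as the integer n → ∞. -/
/-- The height of a rational number: `max(|num|, den)`. -/
def ratHeight (q : ℚ) : ℕ := max q.num.natAbs q.den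

open Polynomial Filter

/-- Integer Bézout identity with a nonzero constant, from coprimality over `ℚ`. -/
lemma exists_int_bezout (Q R : Polynomial ℤ)
    (hcop : IsCoprime (Q.map (Int.castRingHom ℚ)) (R.map (Int.castRingHom ℚ))) :
    ∃ c : ℤ, c ≠ 0 ∧ ∃ u v : Polynomial ℤ, u * Q + v * R = Polynomial.C c := by
  obtain ⟨U, V, hUV⟩ := hcop
  obtain ⟨b₁, hb₁⟩ := IsLocalization.integerNormalization_map_to_map (nonZeroDivisors ℤ) U
  obtain ⟨b₂, hb₂⟩ := IsLocalization.integerNormalization_map_to_map (nonZeroDivisors ℤ) V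
  set u := IsLocalization.integerNormalization (nonZeroDivisors ℤ) U with hu
  set v := IsLocalization.integerNormalization (nonZeroDivisors ℤ) V with hv
  have halg : (algebraMap ℤ ℚ) = Int.castRingHom ℚ := rfl
  have hb₁' : u.map (Int.castRingHom ℚ) = Polynomial.C ((b₁ : ℤ) : ℚ) * U := by
    rw [← halg, hb₁, ← Polynomial.smul_eq_C_mul]
    rw [show ((b₁ : ℤ) : ℚ) • U = (b₁ : ℤ) • U from (Int.cast_smul_eq_zsmul ℚ _ _)]
  have hb₂' : v.map (Int.castRingHom ℚ) = Polynomial.C ((b₂ : ℤ) : ℚ) * V := by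
    rw [← halg, hb₂, ← Polynomial.smul_eq_C_mul]
    rw [show ((b₂ : ℤ) : ℚ) • V = (b₂ : ℤ) • V from (Int.cast_smul_eq_zsmul ℚ _ _)]
  refine ⟨(b₁ : ℤ) * (b₂ : ℤ),
    mul_ne_zero (nonZeroDivisors.coe_ne_zero b₁) (nonZeroDivisors.coe_ne_zero b₂),
    Polynomial.C (b₂ : ℤ) * u, Polynomial.C (b₁ : ℤ) * v, ?_⟩
  apply Polynomial.map_injective (Int.castRingHom ℚ) Int.cast_injective
  simp only [Polynomial.map_add, Polynomial.map_mul, Polynomial.map_C, hb₁', hb₂',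
    Int.coe_castRingHom, Int.cast_mul]
  rw [Polynomial.C_mul]
  linear_combination (Polynomial.C ((b₁ : ℤ) : ℚ) * Polynomial.C ((b₂ : ℤ) : ℚ)) * hUV

/-- Bound on numerator and denominator of `x / y` in terms of a common-divisor bound. -/
lemma ratHeight_bound (x y A : ℤ) (hy : y ≠ 0) (hA : A ≠ 0)
    (hdvd : ∀ k : ℤ, k ∣ x → k ∣ y → k ∣ A) :
    x.natAbs ≤ A.natAbs * ratHeight ((x : ℚ) / (y : ℚ)) ∧
      y.natAbs ≤ A.natAbs * ratHeight ((x : ℚ) / (y : ℚ)) := by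
  set q : ℚ := (x : ℚ) / (y : ℚ) with hqdef
  have hq : q = Rat.divInt x y := by rw [hqdef, Rat.divInt_eq_div]
  have hden : (q.den : ℤ) ∣ y := by rw [hq]; exact Rat.den_dvd x y
  obtain ⟨k, hk⟩ := hden
  have hk0 : k ≠ 0 := by
    intro h; apply hy; rw [hk, h, mul_zero]
  have hdpos : (0 : ℤ) < (q.den : ℤ) := by exact_mod_cast q.pos
  have hcross : q.num * y = x * (q.den : ℤ) := by
    have h1 : (q.num : ℚ) / (q.den : ℚ) = (x : ℚ) / (y : ℚ) := by
      rw [Rat.num_div_den]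
    have h2 : (q.num : ℚ) * (y : ℚ) = (x : ℚ) * (q.den : ℚ) := by
      have hyq : (y : ℚ) ≠ 0 := Int.cast_ne_zero.mpr hy
      have hdq : ((q.den : ℤ) : ℚ) ≠ 0 := Int.cast_ne_zero.mpr hdpos.ne'
      field_simp at h1
      linarith [h1]
    exact_mod_cast h2
  have hx : x = q.num * k := by
    have h3 : q.num * k * (q.den : ℤ) = x * (q.den : ℤ) := by
      rw [← hcross, hk]; ring
    have := mul_right_cancel₀ hdpos.ne' h3
    omega
  have hkA : k ∣ A := hdvd k ⟨q.num, by rw [hx]; ring⟩ ⟨(q.den : ℤ), by rw [hk]; ring⟩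
  have hkle : k.natAbs ≤ A.natAbs := Nat.le_of_dvd (Int.natAbs_pos.mpr hA)
    (Int.natAbs_dvd_natAbs.mpr hkA)
  constructor
  · calc x.natAbs = q.num.natAbs * k.natAbs := by rw [hx, Int.natAbs_mul]
    _ ≤ q.num.natAbs * A.natAbs := Nat.mul_le_mul_left _ hkle
    _ ≤ ratHeight q * A.natAbs := Nat.mul_le_mul_right _ (le_max_left _ _)
    _ = A.natAbs * ratHeight q := Nat.mul_comm _ _
  · calc y.natAbs = q.den * k.natAbs := by rw [hk, Int.natAbs_mul]; simp
    _ ≤ q.den * A.natAbs := Nat.mul_le_mul_left _ hkle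
    _ ≤ ratHeight q * A.natAbs := Nat.mul_le_mul_right _ (le_max_right _ _)
    _ = A.natAbs * ratHeight q := Nat.mul_comm _ _

/-- A monic integer polynomial that is not `1` grows to infinity in absolute value. -/
lemma monic_natAbs_tendsto (P : Polynomial ℤ) (hP : P.Monic) (hne : P ≠ 1) :
    Filter.Tendsto (fun n : ℤ => (P.eval n).natAbs) Filter.atTop Filter.atTop := by
  have hdeg : 0 < P.degree := by
    rcases lt_or_ge 0 P.degree with h | h
    · exact h
    · exfalso
      apply hne
      have hnd : P.natDegree = 0 := Polynomial.natDegree_eq_zero_iff_degree_le_zero.mpr h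
      have := hP.natDegree_eq_zero.mp hnd
      exact this
  have hdeg' : 0 < (P.map (Int.castRingHom ℝ)).degree := by
    rwa [Polynomial.degree_map_eq_of_injective Int.cast_injective]
  have h1 := Polynomial.abs_tendsto_atTop _ hdeg'
  have h2 : Filter.Tendsto (fun n : ℤ => (n : ℝ)) Filter.atTop Filter.atTop :=
    tendsto_intCast_atTop_atTop
  have h3 := h1.comp h2
  have heq : (fun n : ℤ => |Polynomial.eval ((n : ℤ) : ℝ) (P.map (Int.castRingHom ℝ))|)
      = fun n : ℤ => (((P.eval n).natAbs : ℕ) : ℝ) := by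
    funext n
    rw [Polynomial.eval_intCast_map]
    simp [Nat.cast_natAbs, Int.coe_castRingHom]
  rw [show (fun x : ℤ => |Polynomial.eval ((x : ℤ) : ℝ) (P.map (Int.castRingHom ℝ))|) =
      ((fun x : ℝ => |Polynomial.eval x (P.map (Int.castRingHom ℝ))|) ∘ fun n : ℤ => (n : ℝ))
      from rfl] at heq
  rw [heq] at h3
  exact tendsto_natCast_atTop_iff.mp h3

/-- A nonzero integer polynomial eventually has no roots. -/
lemma eventually_ne_zero_of_ne_zero (P : Polynomial ℤ) (hP : P ≠ 0) :
    ∀ᶠ n : ℤ in Filter.atTop, P.eval n ≠ 0 := by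
  have hfin := Polynomial.finite_setOf_isRoot hP
  obtain ⟨B, hB⟩ := hfin.bddAbove
  filter_upwards [Filter.eventually_gt_atTop B] with n hn hroot
  exact absurd (hB hroot) (not_le.2 hn)

/-- If `f(x) = aQ(x)/(bR(x))` is a non-constant rational function over `ℚ`, with `a, b`
coprime integers and `Q, R` coprime monic integer polynomials, then the height of `f(n)`
tends to infinity as the integer `n → ∞`.  (Since `Q, R` are monic and coprime, `f` being
non-constant is equivalent to `Q ≠ 1` or `R ≠ 1`.) -/
theorem height_tendsto_atTop (a b : ℤ) (ha : a ≠ 0) (hb : b ≠ 0) (hab : IsCoprime a b)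
    (Q R : Polynomial ℤ) (hQ : Q.Monic) (hR : R.Monic)
    (hcop : IsCoprime (Q.map (Int.castRingHom ℚ)) (R.map (Int.castRingHom ℚ)))
    (hnc : Q ≠ 1 ∨ R ≠ 1) :
    Filter.Tendsto
      (fun n : ℤ => ratHeight (((a * Q.eval n : ℤ) : ℚ) / ((b * R.eval n : ℤ) : ℚ)))
      Filter.atTop Filter.atTop := by
  obtain ⟨c, hc, u, v, huv⟩ := exists_int_bezout Q R hcop
  set A : ℤ := a * b * c with hAdef
  have hA : A ≠ 0 := mul_ne_zero (mul_ne_zero ha hb) hc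
  have hApos : 0 < A.natAbs := Int.natAbs_pos.mpr hA
  have hdvd : ∀ n : ℤ, ∀ k : ℤ, k ∣ a * Q.eval n → k ∣ b * R.eval n → k ∣ A := by
    intro n k h1 h2
    have hcEval : u.eval n * Q.eval n + v.eval n * R.eval n = c := by
      have := congrArg (Polynomial.eval n) huv
      simpa using this
    have key : A = u.eval n * b * (a * Q.eval n) + v.eval n * a * (b * R.eval n) := by
      rw [hAdef]; linear_combination (-(a * b)) * hcEval
    rw [key]
    exact dvd_add (h1.mul_left _) (h2.mul_left _)
  have hRne : ∀ᶠ n : ℤ in Filter.atTop, b * R.eval n ≠ 0 := by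
    filter_upwards [eventually_ne_zero_of_ne_zero R hR.ne_zero] with n hn
    exact mul_ne_zero hb hn
  rw [Filter.tendsto_atTop]
  intro N
  rcases hnc with hQ1 | hR1
  · -- numerator grows
    have hgrow := monic_natAbs_tendsto Q hQ hQ1
    have hev := hgrow.eventually_ge_atTop (A.natAbs * N)
    filter_upwards [hev, hRne] with n hn hRn
    have hbound := (ratHeight_bound (a * Q.eval n) (b * R.eval n) A hRn hA (hdvd n)).1
    have hxabs : A.natAbs * N ≤ (a * Q.eval n).natAbs := by
      rw [show (a * Q.eval n).natAbs = a.natAbs * (Q.eval n).natAbs from Int.natAbs_mul _ _]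
      calc A.natAbs * N ≤ (Q.eval n).natAbs := hn
      _ ≤ a.natAbs * (Q.eval n).natAbs :=
        Nat.le_mul_of_pos_left _ (Int.natAbs_pos.mpr ha)
    exact Nat.le_of_mul_le_mul_left (le_trans hxabs hbound) hApos
  · -- denominator grows
    have hgrow := monic_natAbs_tendsto R hR hR1
    have hev := hgrow.eventually_ge_atTop (A.natAbs * N)
    filter_upwards [hev, hRne] with n hn hRn
    have hbound := (ratHeight_bound (a * Q.eval n) (b * R.eval n) A hRn hA (hdvd n)).2
    have hyabs : A.natAbs * N ≤ (b * R.eval n).natAbs := by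
      rw [show (b * R.eval n).natAbs = b.natAbs * (R.eval n).natAbs from Int.natAbs_mul _ _]
      calc A.natAbs * N ≤ (R.eval n).natAbs := hn
      _ ≤ b.natAbs * (R.eval n).natAbs :=
        Nat.le_mul_of_pos_left _ (Int.natAbs_pos.mpr hb)
    exact Nat.le_of_mul_le_mul_left (le_trans hyabs hbound) hApos
end

section
/- In the root system A_n realized in ℤ^{n+1}, if R' and R'' are disjoint closed root subsystems and the equivalence relation i ∼ j ⟺ (ε_i − ε_j ∈ R' ∪ {0}) has c equivalence classes of sizes a_1, …, a_c, then |R'| + |R''| ≤ (n+2−c)² + c² − (n+2). -/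
open scoped RealInnerProductSpace

/-- `S` is a closed root subsystem of `R`: a subset which is itself a root system
(closed under negation and its own reflections) and is additively closed in `R`:
`α, β ∈ S` and `α + β ∈ R` imply `α + β ∈ S`. -/
def IsClosedSub {E : Type*} [NormedAddCommGroup E] [InnerProductSpace ℝ E]
    (R S : Set E) : Prop :=
  S ⊆ R ∧ (∀ α ∈ S, -α ∈ S) ∧
    (∀ α ∈ S, ∀ β ∈ S, β - (2 * ⟪β, α⟫ / ⟪α, α⟫) • α ∈ S) ∧
    (∀ α ∈ S, ∀ β ∈ S, α + β ∈ R → α + β ∈ S)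

/-- The root system `A_n`, realized as the vectors `ε_i - ε_j` (`i ≠ j`) in `ℝ^{n+1}`. -/
def rootSystemA (n : ℕ) : Set (EuclideanSpace ℝ (Fin (n + 1))) :=
  {v | ∃ i j : Fin (n + 1), i ≠ j ∧
    v = EuclideanSpace.single i (1 : ℝ) - EuclideanSpace.single j (1 : ℝ)}

/-- Sum of `min z y` over `y ∈ v`, as an integer. -/
def innerS (v : Multiset ℕ) (z : ℕ) : ℤ := (v.map (fun y : ℕ => min (z:ℤ) (y:ℤ))).sum

/-- Double sum of `min z y` over `z ∈ u`, `y ∈ v`. -/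
def HH (u v : Multiset ℕ) : ℤ := (u.map (innerS v)).sum

/-- Sum of squares. -/
def sumSq (s : Multiset ℕ) : ℤ := (s.map (fun x : ℕ => (x:ℤ)^2)).sum

lemma innerS_cons (x : ℕ) (v : Multiset ℕ) (z : ℕ) :
    innerS (x ::ₘ v) z = min (z:ℤ) (x:ℤ) + innerS v z := by
  simp [innerS]

lemma innerS_le (v : Multiset ℕ) (x : ℕ) : innerS v x ≤ (v.card : ℤ) * x := by
  calc innerS v x ≤ (v.map (fun _ : ℕ => (x:ℤ))).sum := by
        apply Multiset.sum_map_le_sum_map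
        intro y hy; exact min_le_left _ _
    _ = (v.card : ℤ) * x := by simp [mul_comm]

lemma HH_cons_left (x : ℕ) (u v : Multiset ℕ) :
    HH (x ::ₘ u) v = innerS v x + HH u v := by
  simp [HH]

lemma HH_cons_right (x : ℕ) (u v : Multiset ℕ) :
    HH u (x ::ₘ v) = (u.map (fun z : ℕ => min (z:ℤ) (x:ℤ))).sum + HH u v := by
  simp only [HH, innerS_cons]
  rw [← Multiset.sum_map_add]

lemma sumSq_cons (x : ℕ) (s : Multiset ℕ) : sumSq (x ::ₘ s) = (x:ℤ)^2 + sumSq s := by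
  simp [sumSq]

lemma key_numeric (s : Multiset ℕ) (hs : ∀ x ∈ s, 1 ≤ x) :
    sumSq s + HH s s
    ≤ ((s.sum : ℤ) + 1 - s.card)^2 + (s.card : ℤ)^2 + (s.sum : ℤ) - 1 := by
  induction s using Multiset.strongInductionOn with
  | ih s IH =>
  rcases eq_or_ne s 0 with rfl | hne
  · simp [sumSq, HH]
  · have hnel : s.toFinset.Nonempty := by
      simpa [Multiset.toFinset_nonempty] using hne
    obtain ⟨x, hx', hmin'⟩ := Finset.exists_min_image s.toFinset id hnel
    have hx : x ∈ s := Multiset.mem_toFinset.mp hx'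
    have hmin : ∀ y ∈ s, x ≤ y := fun y hy => hmin' y (Multiset.mem_toFinset.mpr hy)
    obtain ⟨t, rfl⟩ : ∃ t, s = x ::ₘ t := ⟨s.erase x, (Multiset.cons_erase hx).symm⟩
    have ht : t < x ::ₘ t := Multiset.lt_cons_self t x
    have hts : ∀ y ∈ t, 1 ≤ y := fun y hy => hs y (Multiset.mem_cons_of_mem hy)
    have IHt := IH t ht hts
    have hx1 : 1 ≤ x := hs x (Multiset.mem_cons_self x t)
    have hcross1 : innerS t x ≤ (t.card : ℤ) * x := innerS_le t x
    have hcross2 : (t.map (fun z : ℕ => min (z:ℤ) (x:ℤ))).sum ≤ (t.card : ℤ) * x := by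
      calc (t.map (fun z : ℕ => min (z:ℤ) (x:ℤ))).sum
          ≤ (t.map (fun _ : ℕ => (x:ℤ))).sum := by
            apply Multiset.sum_map_le_sum_map
            intro y hy; exact min_le_right _ _
        _ = (t.card : ℤ) * x := by simp [mul_comm]
    have expand : sumSq (x ::ₘ t) + HH (x ::ₘ t) (x ::ₘ t)
        = (sumSq t + HH t t)
          + ((x:ℤ)^2 + (x:ℤ) + innerS t x + (t.map (fun z : ℕ => min (z:ℤ) (x:ℤ))).sum) := by
      rw [sumSq_cons, HH_cons_left, HH_cons_right, innerS_cons]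
      simp only [min_self]
      ring
    rw [expand]
    have hsum : ((x ::ₘ t).sum : ℤ) = (x : ℤ) + (t.sum : ℤ) := by
      rw [Multiset.sum_cons]; push_cast; ring
    have hcard : (((x ::ₘ t).card : ℕ) : ℤ) = (t.card : ℤ) + 1 := by
      rw [Multiset.card_cons]; push_cast; ring
    rw [hsum, hcard]
    have hkey : 0 ≤ ((x:ℤ) - 1) * ((t.sum : ℤ) - 2 * t.card) := by
      rcases eq_or_lt_of_le hx1 with h1 | h2
      · simp [← h1]
      · have h2' : 2 ≤ x := h2
        have h2e : ∀ y ∈ t, 2 ≤ y := fun y hy =>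
          le_trans h2' (hmin y (Multiset.mem_cons_of_mem hy))
        have h2c : Multiset.card t * 2 ≤ t.sum := by
          have := Multiset.card_nsmul_le_sum h2e
          simpa [smul_eq_mul, mul_comm] using this
        have h2c' : 2 * (t.card : ℤ) ≤ (t.sum : ℤ) := by exact_mod_cast by linarith
        have hx2 : (0:ℤ) ≤ (x:ℤ) - 1 := by
          have : (1:ℤ) ≤ (x:ℤ) := by exact_mod_cast hx1
          linarith
        nlinarith
    nlinarith [IHt, hcross1, hcross2]



noncomputable def eA (n : ℕ) (i : Fin (n+1)) : EuclideanSpace ℝ (Fin (n+1)) :=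
  EuclideanSpace.single i 1

lemma eA_sub_apply (n : ℕ) (i j m : Fin (n+1)) :
    (eA n i - eA n j) m = (if m = i then 1 else 0) - (if m = j then 1 else 0) := by
  simp [eA, EuclideanSpace.single_apply, PiLp.sub_apply]

lemma eA_sub_ne (n : ℕ) {i j : Fin (n+1)} (h : i ≠ j) : eA n i - eA n j ≠ 0 := by
  intro h0
  have h1 := congrArg (fun v : EuclideanSpace ℝ (Fin (n+1)) => v i) h0
  simp only [eA, PiLp.sub_apply, EuclideanSpace.single_apply] at h1
  simp [h] at h1

lemma eA_mem_iff (n : ℕ) (i j : Fin (n+1)) :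
    eA n i - eA n j ∈ rootSystemA n ↔ i ≠ j := by
  constructor
  · rintro ⟨k, l, hkl, hv⟩ rfl
    simp only [sub_self] at hv
    exact eA_sub_ne n hkl hv.symm
  · intro h; exact ⟨i, j, h, rfl⟩

lemma eA_inj (n : ℕ) {i j k l : Fin (n+1)} (hij : i ≠ j) (hkl : k ≠ l)
    (h : eA n i - eA n j = eA n k - eA n l) : i = k ∧ j = l := by
  have hi := congrArg (fun v : EuclideanSpace ℝ (Fin (n+1)) => v i) h
  have hj := congrArg (fun v : EuclideanSpace ℝ (Fin (n+1)) => v j) h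
  simp only [eA, PiLp.sub_apply, EuclideanSpace.single_apply] at hi hj
  simp only [if_true] at hi hj
  rw [if_neg hij] at hi
  rw [if_neg (fun hx : j = i => hij hx.symm)] at hj
  constructor
  · by_contra hik
    rw [if_neg hik] at hi
    split_ifs at hi <;> norm_num at hi
  · by_contra hjl
    rw [if_neg hjl] at hj
    split_ifs at hj <;> norm_num at hj

def relOf (n : ℕ) (S : Set (EuclideanSpace ℝ (Fin (n+1)))) (i j : Fin (n+1)) : Prop :=
  i = j ∨ eA n i - eA n j ∈ S

lemma relOf_equiv {n : ℕ} {S : Set (EuclideanSpace ℝ (Fin (n+1)))}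
    (hS : IsClosedSub (rootSystemA n) S) : Equivalence (relOf n S) := by
  constructor
  · intro i; exact Or.inl rfl
  · intro i j h
    rcases h with rfl | h
    · exact Or.inl rfl
    · right
      have := hS.2.1 _ h
      rwa [neg_sub] at this
  · intro i j k hij hjk
    rcases hij with rfl | hij
    · exact hjk
    rcases hjk with rfl | hjk
    · exact Or.inr hij
    by_cases hik : i = k
    · exact Or.inl hik
    · right
      have hmem : (eA n i - eA n j) + (eA n j - eA n k) ∈ rootSystemA n := by
        rw [sub_add_sub_cancel]
        exact (eA_mem_iff n i k).mpr hik
      have := hS.2.2.2 _ hij _ hjk hmem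
      rwa [sub_add_sub_cancel] at this

lemma ncard_add {n : ℕ} {S : Set (EuclideanSpace ℝ (Fin (n+1)))}
    (hS : IsClosedSub (rootSystemA n) S) :
    S.ncard + (n+1) = Set.ncard {p : Fin (n+1) × Fin (n+1) | relOf n S p.1 p.2} := by
  classical
  have himg : S = (fun p : Fin (n+1) × Fin (n+1) => eA n p.1 - eA n p.2) ''
      {p | p.1 ≠ p.2 ∧ relOf n S p.1 p.2} := by
    ext v; constructor
    · intro hv
      obtain ⟨i, j, hij, rfl⟩ := hS.1 hv
      exact ⟨(i, j), ⟨hij, Or.inr hv⟩, rfl⟩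
    · rintro ⟨⟨i, j⟩, ⟨hij, hrel⟩, rfl⟩
      rcases hrel with h | h
      · exact absurd h hij
      · exact h
  have hinj : Set.InjOn (fun p : Fin (n+1) × Fin (n+1) => eA n p.1 - eA n p.2)
      {p | p.1 ≠ p.2 ∧ relOf n S p.1 p.2} := by
    rintro ⟨i, j⟩ ⟨hij, _⟩ ⟨k, l⟩ ⟨hkl, _⟩ h
    obtain ⟨h1, h2⟩ := eA_inj n hij hkl h
    exact Prod.ext h1 h2
  have h1 : S.ncard = Set.ncard {p : Fin (n+1) × Fin (n+1) | p.1 ≠ p.2 ∧ relOf n S p.1 p.2} := by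
    conv_lhs => rw [himg]
    exact Set.ncard_image_of_injOn hinj
  have hsplit : {p : Fin (n+1) × Fin (n+1) | relOf n S p.1 p.2}
      = {p | p.1 ≠ p.2 ∧ relOf n S p.1 p.2} ∪ {p | p.1 = p.2} := by
    ext ⟨i, j⟩
    simp only [Set.mem_setOf_eq, Set.mem_union, relOf]
    tauto
  have hdisjoint : Disjoint {p : Fin (n+1) × Fin (n+1) | p.1 ≠ p.2 ∧ relOf n S p.1 p.2}
      {p : Fin (n+1) × Fin (n+1) | p.1 = p.2} := by
    rw [Set.disjoint_left]
    rintro ⟨i, j⟩ ⟨h1, _⟩ h2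
    exact h1 h2
  have hdiag : Set.ncard {p : Fin (n+1) × Fin (n+1) | p.1 = p.2} = n + 1 := by
    have himg2 : {p : Fin (n+1) × Fin (n+1) | p.1 = p.2}
        = (fun i : Fin (n+1) => (i, i)) '' Set.univ := by
      ext ⟨i, j⟩
      simp only [Set.mem_setOf_eq, Set.image_univ, Set.mem_range, Prod.mk.injEq]
      constructor
      · rintro rfl; exact ⟨i, rfl, rfl⟩
      · rintro ⟨a, rfl, rfl⟩; rfl
    rw [himg2, Set.ncard_image_of_injective _ (fun a b h => (Prod.ext_iff.mp h).1),
      Set.ncard_univ]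
    simp
  rw [hsplit, Set.ncard_union_eq hdisjoint (Set.toFinite _) (Set.toFinite _), h1, hdiag]

open Finset in
/-- If `R', R''` are disjoint closed root subsystems of `A_n` and the relation
`i ∼ j ⟺ ε_i - ε_j ∈ R' ∪ {0}` has `c` equivalence classes, then
`|R'| + |R''| ≤ (n+2-c)² + c² - (n+2)`. -/
theorem An_closed_pair_bound (n : ℕ) (R' R'' : Set (EuclideanSpace ℝ (Fin (n + 1))))
    (h' : IsClosedSub (rootSystemA n) R') (h'' : IsClosedSub (rootSystemA n) R'')
    (hdisj : Disjoint R' R'') (c : ℕ)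
    (hc : c = (Set.range fun i : Fin (n + 1) =>
        {j : Fin (n + 1) | i = j ∨
          EuclideanSpace.single i (1 : ℝ) - EuclideanSpace.single j (1 : ℝ) ∈ R'}).ncard) :
    (R'.ncard : ℤ) + (R''.ncard : ℤ) ≤
      ((n : ℤ) + 2 - (c : ℤ)) ^ 2 + (c : ℤ) ^ 2 - ((n : ℤ) + 2) := by
  classical
  set sd : Setoid (Fin (n+1)) := ⟨relOf n R', relOf_equiv h'⟩ with hsd
  have heq' : Equivalence (relOf n R') := relOf_equiv h'
  have heq'' : Equivalence (relOf n R'') := relOf_equiv h''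
  set f : Quotient sd → ℕ := fun q => (univ.filter fun i => Quotient.mk sd i = q).card with hf
  have hf1 : ∀ q : Quotient sd, 1 ≤ f q := by
    intro q
    obtain ⟨i, rfl⟩ := Quotient.exists_rep q
    exact Finset.card_pos.mpr ⟨i, Finset.mem_filter.mpr ⟨Finset.mem_univ i, rfl⟩⟩
  -- c is the number of equivalence classes
  have hcQ : c = Fintype.card (Quotient sd) := by
    have hresp : ∀ a b : Fin (n+1), relOf n R' a b →
        {j | relOf n R' a j} = {j | relOf n R' b j} := by
      intro a b hab
      ext j
      simp only [Set.mem_setOf_eq]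
      exact ⟨fun h => heq'.trans (heq'.symm hab) h, fun h => heq'.trans hab h⟩
    have hc' : c = Set.ncard (Set.range fun i : Fin (n+1) => {j | relOf n R' i j}) := hc
    let φ : Quotient sd → Set (Fin (n+1)) := Quotient.lift (fun i => {j | relOf n R' i j}) hresp
    have hφinj : Function.Injective φ := by
      intro q q'
      obtain ⟨a, rfl⟩ := Quotient.exists_rep q
      obtain ⟨b, rfl⟩ := Quotient.exists_rep q'
      intro h
      have hab : relOf n R' a b := by
        have hb : b ∈ {j | relOf n R' b j} := heq'.refl b
        have : b ∈ {j | relOf n R' a j} := by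
          rw [show {j | relOf n R' a j} = {j | relOf n R' b j} from h]
          exact hb
        exact this
      exact Quotient.sound hab
    have hrange : (Set.range fun i : Fin (n+1) => {j | relOf n R' i j}) = Set.range φ := by
      ext s
      constructor
      · rintro ⟨i, rfl⟩; exact ⟨Quotient.mk sd i, rfl⟩
      · rintro ⟨q, rfl⟩
        obtain ⟨i, rfl⟩ := Quotient.exists_rep q
        exact ⟨i, rfl⟩
    rw [hc', hrange, ← Set.image_univ, Set.ncard_image_of_injective _ hφinj,
      Set.ncard_univ, Nat.card_eq_fintype_card]
  -- cardinality of R'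
  have key1 : R'.ncard + (n+1) = ∑ q : Quotient sd, f q ^ 2 := by
    rw [ncard_add h', Set.ncard_eq_toFinset_card', Set.toFinset_setOf,
      Finset.card_eq_sum_card_fiberwise
        (f := fun p : Fin (n+1) × Fin (n+1) => Quotient.mk sd p.1)
        (t := univ) (fun _ _ => mem_univ _)]
    refine Finset.sum_congr rfl fun q _ => ?_
    rw [Finset.filter_filter]
    have hset : (univ.filter fun p : Fin (n+1) × Fin (n+1) =>
          relOf n R' p.1 p.2 ∧ Quotient.mk sd p.1 = q)
        = (univ.filter fun i => Quotient.mk sd i = q) ×ˢ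
          (univ.filter fun i => Quotient.mk sd i = q) := by
      ext ⟨i, j⟩
      simp only [mem_filter, mem_product, mem_univ, true_and]
      constructor
      · rintro ⟨hrel, hq⟩
        exact ⟨hq, (Quotient.sound (heq'.symm hrel)).trans hq⟩
      · rintro ⟨hqi, hqj⟩
        exact ⟨Quotient.exact (hqi.trans hqj.symm), hqi⟩
    rw [hset, Finset.card_product, hf, pow_two]
  -- cardinality bound for R''
  have key2 : R''.ncard + (n+1) ≤
      ∑ b : Quotient sd × Quotient sd, min (f b.1) (f b.2) := by
    rw [ncard_add h'', Set.ncard_eq_toFinset_card', Set.toFinset_setOf,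
      Finset.card_eq_sum_card_fiberwise
        (f := fun p : Fin (n+1) × Fin (n+1) => (Quotient.mk sd p.1, Quotient.mk sd p.2))
        (t := univ) (fun _ _ => mem_univ _)]
    apply Finset.sum_le_sum
    rintro ⟨b1, b2⟩ _
    rw [Finset.filter_filter]
    have hinjkey : ∀ i j j' : Fin (n+1), relOf n R'' i j → relOf n R'' i j' →
        Quotient.mk sd j = Quotient.mk sd j' → j = j' := by
      intro i j j' hij hij' hq
      by_contra hne
      have hrel'' : relOf n R'' j j' := heq''.trans (heq''.symm hij) hij'
      have hrel' : relOf n R' j j' := Quotient.exact hq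
      have hmem'' : eA n j - eA n j' ∈ R'' := by
        rcases hrel'' with h | h
        · exact absurd h hne
        · exact h
      have hmem' : eA n j - eA n j' ∈ R' := by
        rcases hrel' with h | h
        · exact absurd h hne
        · exact h
      exact Set.disjoint_left.mp hdisj hmem' hmem''
    have hinjkey' : ∀ i i' j : Fin (n+1), relOf n R'' i j → relOf n R'' i' j →
        Quotient.mk sd i = Quotient.mk sd i' → i = i' := by
      intro i i' j hij hij' hq
      exact hinjkey j i i' (heq''.symm hij) (heq''.symm hij') hq
    refine le_min ?_ ?_
    · refine Finset.card_le_card_of_injOn Prod.fst ?_ ?_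
      · rintro ⟨i, j⟩ hp
        simp only [Finset.mem_coe, mem_filter, mem_univ, true_and, Prod.mk.injEq] at hp ⊢
        exact hp.2.1
      · rintro ⟨i, j⟩ hp ⟨i', j'⟩ hp' h1
        simp only [Finset.coe_filter, Set.mem_setOf_eq, mem_univ, true_and,
          Prod.mk.injEq] at hp hp'
        cases h1
        have : j = j' := hinjkey i j j' hp.1 hp'.1 (hp.2.2.trans hp'.2.2.symm)
        rw [this]
    · refine Finset.card_le_card_of_injOn Prod.snd ?_ ?_
      · rintro ⟨i, j⟩ hp
        simp only [Finset.mem_coe, mem_filter, mem_univ, true_and, Prod.mk.injEq] at hp ⊢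
        exact hp.2.2
      · rintro ⟨i, j⟩ hp ⟨i', j'⟩ hp' h2
        simp only [Finset.coe_filter, Set.mem_setOf_eq, mem_univ, true_and,
          Prod.mk.injEq] at hp hp'
        cases h2
        have : i = i' := hinjkey' i i' j hp.1 hp'.1 (hp.2.1.trans hp'.2.1.symm)
        rw [this]
  -- translate to the multiset of class sizes
  set m : Multiset ℕ := Finset.univ.val.map f with hm
  have hm1 : ∀ x ∈ m, 1 ≤ x := by
    intro x hx
    rw [hm, Multiset.mem_map] at hx
    obtain ⟨q, _, rfl⟩ := hx
    exact hf1 q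
  have hnum := key_numeric m hm1
  have hmcard : Multiset.card m = Fintype.card (Quotient sd) := by
    rw [hm, Multiset.card_map]
    rfl
  have hmsum : m.sum = ∑ q : Quotient sd, f q := by
    rw [Finset.sum_eq_multiset_sum, hm]
  have hsumN : ∑ q : Quotient sd, f q = n + 1 := by
    have h := Finset.card_eq_sum_card_fiberwise
      (f := fun i : Fin (n+1) => Quotient.mk sd i) (s := univ) (t := univ)
      (fun _ _ => mem_univ _)
    rw [Finset.card_univ, Fintype.card_fin] at h
    rw [← h]
  have hsumSq : sumSq m = ∑ q : Quotient sd, ((f q : ℤ))^2 := by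
    rw [sumSq, hm, Multiset.map_map, Finset.sum_eq_multiset_sum]
    rfl
  have hinnerS : ∀ z : ℕ, innerS m z = ∑ q' : Quotient sd, min (z : ℤ) ((f q' : ℤ)) := by
    intro z
    rw [innerS, hm, Multiset.map_map, Finset.sum_eq_multiset_sum]
    rfl
  have hHH : HH m m = ∑ q : Quotient sd, ∑ q' : Quotient sd, min ((f q : ℤ)) ((f q' : ℤ)) := by
    rw [HH]
    conv_lhs => rw [hm]
    rw [Multiset.map_map, Finset.sum_eq_multiset_sum]
    refine congrArg Multiset.sum (congrArg (Multiset.map · univ.val) ?_)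
    funext q
    exact hinnerS (f q)
  -- assemble
  have e1 : (R'.ncard : ℤ) + ((n : ℤ) + 1) = ∑ q : Quotient sd, ((f q : ℤ))^2 := by
    have h1 := key1
    zify at h1
    push_cast at h1
    linarith [h1]
  have e2 : (R''.ncard : ℤ) + ((n : ℤ) + 1) ≤
      ∑ q : Quotient sd, ∑ q' : Quotient sd, min ((f q : ℤ)) ((f q' : ℤ)) := by
    have h2 := key2
    have hcast : ((∑ b : Quotient sd × Quotient sd, min (f b.1) (f b.2) : ℕ) : ℤ)
        = ∑ q : Quotient sd, ∑ q' : Quotient sd, min ((f q : ℤ)) ((f q' : ℤ)) := by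
      push_cast [Nat.cast_min]
      rw [Fintype.sum_prod_type]
    calc (R''.ncard : ℤ) + ((n : ℤ) + 1)
        = ((R''.ncard + (n+1) : ℕ) : ℤ) := by push_cast; ring
      _ ≤ ((∑ b : Quotient sd × Quotient sd, min (f b.1) (f b.2) : ℕ) : ℤ) := by
          exact_mod_cast h2
      _ = _ := hcast
  have hmsumZ : ((m.sum : ℕ) : ℤ) = (n : ℤ) + 1 := by
    rw [hmsum, hsumN]; push_cast; ring
  have hmcardZ : ((Multiset.card m : ℕ) : ℤ) = (c : ℤ) := by
    rw [hmcard, ← hcQ]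
  rw [hsumSq, hHH, hmsumZ, hmcardZ] at hnum
  linarith [hnum, e1, e2]
end

section
/- There exist an integer n and two injective group homomorphisms φ_1, φ_2 : 𝔽_2³ → 𝔽_2^n such that, with σ : 𝔽_2^n → GL_n(ℂ) the diagonal sign representation σ(z_1,…,z_n) = diag((−1)^{z_1},…,(−1)^{z_n}), the subgroups σ(φ_1(𝔽_2³)) and σ(φ_2(𝔽_2³)) are not conjugate in GL_n(ℂ), yet for every integer c, |{x ∈ 𝔽_2³ : tr σ(φ_1(x)) = c}| = |{x ∈ 𝔽_2³ : tr σ(φ_2(x)) = c}|. -/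
/-- The diagonal sign representation `σ : 𝔽₂ⁿ → GLₙ(ℂ)`,
`σ(z) = diag((-1)^{z_1}, …, (-1)^{z_n})`. -/
noncomputable def diagSign (n : ℕ) (z : Fin n → ZMod 2) : Matrix (Fin n) (Fin n) ℂ :=
  Matrix.diagonal fun i => (-1 : ℂ) ^ (z i).val

namespace GassmannAux

def A1 : Matrix (Fin 6) (Fin 3) (ZMod 2) := !![1,0,1; 1,0,1; 1,1,0; 1,1,0; 1,1,1; 1,1,1]
def A2 : Matrix (Fin 6) (Fin 3) (ZMod 2) := !![1,0,0; 1,0,1; 1,1,0; 1,1,1; 1,1,1; 1,1,1]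

def wt {n : ℕ} (z : Fin n → ZMod 2) : ℕ := (Finset.univ.filter fun i => z i = 1).card

def φA (A : Matrix (Fin 6) (Fin 3) (ZMod 2)) : (Fin 3 → ZMod 2) →+ (Fin 6 → ZMod 2) :=
  A.mulVecLin.toAddMonoidHom

lemma φA_apply (A : Matrix (Fin 6) (Fin 3) (ZMod 2)) (x : Fin 3 → ZMod 2) :
    φA A x = A.mulVec x := rfl

lemma val0 : (0 : ZMod 2).val = 0 := rfl
lemma val1 : (1 : ZMod 2).val = 1 := rfl

lemma neg_one_pow_inj : ∀ a b : ZMod 2, (-1:ℂ)^a.val = (-1:ℂ)^b.val → a = b := by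
  intro a b
  rcases (by decide : ∀ a : ZMod 2, a = 0 ∨ a = 1) a with rfl | rfl <;> rcases (by decide : ∀ a : ZMod 2, a = 0 ∨ a = 1) b with rfl | rfl <;> simp [val0, val1] <;> intro h <;> norm_num at h

lemma diagSign_inj (n : ℕ) : Function.Injective (diagSign n) := by
  intro z w h
  funext i
  have h2 := congrArg (fun M => M i i) h
  simp only [diagSign, Matrix.diagonal_apply_eq] at h2
  exact neg_one_pow_inj _ _ h2

lemma diagSign_add (n : ℕ) (z w : Fin n → ZMod 2) :
    diagSign n (z + w) = diagSign n z * diagSign n w := by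
  unfold diagSign
  rw [Matrix.diagonal_mul_diagonal]
  have key : ∀ a b : ZMod 2, (-1:ℂ)^((a+b).val) = (-1)^a.val * (-1)^b.val := by
    intro a b; rcases (by decide : ∀ a : ZMod 2, a = 0 ∨ a = 1) a with rfl | rfl <;> rcases (by decide : ∀ a : ZMod 2, a = 0 ∨ a = 1) b with rfl | rfl <;>
      simp [show ((1:ZMod 2)+1).val = 0 from rfl, val0, val1]
  exact congrArg Matrix.diagonal (funext fun i => key (z i) (w i))

lemma trace_diagSign (n : ℕ) (z : Fin n → ZMod 2) :
    (diagSign n z).trace = ((n:ℂ) - 2 * (wt z : ℂ)) := by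
  rw [diagSign, Matrix.trace_diagonal]
  rw [← Finset.sum_filter_add_sum_filter_not Finset.univ (fun i => z i = 1)]
  have h1 : ∀ i ∈ Finset.univ.filter (fun i => z i = 1), (-1:ℂ)^(z i).val = -1 := by
    intro i hi
    simp only [Finset.mem_filter] at hi
    rw [hi.2, val1]; norm_num
  have h2 : ∀ i ∈ Finset.univ.filter (fun i => ¬ z i = 1), (-1:ℂ)^(z i).val = 1 := by
    intro i hi
    simp only [Finset.mem_filter] at hi
    have hz : z i = 0 := by
      have : ∀ a : ZMod 2, ¬ a = 1 → a = 0 := by decide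
      exact this _ hi.2
    rw [hz, val0]; norm_num
  rw [Finset.sum_congr rfl h1, Finset.sum_congr rfl h2, Finset.sum_const, Finset.sum_const]
  have hc : (Finset.univ.filter fun i => z i = 1).card
      + (Finset.univ.filter fun i => ¬ z i = 1).card = n := by
    rw [Finset.card_filter_add_card_filter_not]; simp
  have hC : ((Finset.univ.filter fun i => z i = 1).card : ℂ)
      + ((Finset.univ.filter fun i => ¬ z i = 1).card : ℂ) = n := by exact_mod_cast hc
  simp only [nsmul_eq_mul, wt]
  linear_combination hC

lemma inj1 : Function.Injective (φA A1) := by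
  show Function.Injective fun x => A1.mulVec x
  decide

lemma inj2 : Function.Injective (φA A2) := by
  show Function.Injective fun x => A2.mulVec x
  decide

lemma wt_swap : ∀ x : Fin 3 → ZMod 2,
    wt (A2.mulVec ((Equiv.swap ![0,1,1] ![1,1,1]) x)) = wt (A1.mulVec x) := by decide

lemma no_linear_iso : ¬ ∃ a b c : Fin 3 → ZMod 2, ∀ x : Fin 3 → ZMod 2,
    wt (A2.mulVec (x 0 • a + x 1 • b + x 2 • c)) = wt (A1.mulVec x) := by decide

lemma decomp : ∀ x : Fin 3 → ZMod 2,
    x = x 0 • (![1,0,0] : Fin 3 → ZMod 2) + x 1 • ![0,1,0] + x 2 • ![0,0,1] := by decide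

end GassmannAux

open GassmannAux in
/-- There exist `n` and injective homomorphisms `φ₁, φ₂ : 𝔽₂³ → 𝔽₂ⁿ` such that
`σ(φ₁(𝔽₂³))` and `σ(φ₂(𝔽₂³))` are not conjugate in `GLₙ(ℂ)`, yet the trace counts
agree: for every integer `c`, `|{x : tr σ(φ₁(x)) = c}| = |{x : tr σ(φ₂(x)) = c}|`. -/
theorem gassmann_diagonal_subgroups :
    ∃ (n : ℕ) (φ₁ φ₂ : (Fin 3 → ZMod 2) →+ (Fin n → ZMod 2)),
      Function.Injective φ₁ ∧ Function.Injective φ₂ ∧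
      (¬ ∃ P : (Matrix (Fin n) (Fin n) ℂ)ˣ,
        (fun M => (P : Matrix (Fin n) (Fin n) ℂ) * M *
            ((P⁻¹ : (Matrix (Fin n) (Fin n) ℂ)ˣ) : Matrix (Fin n) (Fin n) ℂ)) ''
          (Set.range fun x => diagSign n (φ₁ x)) =
          Set.range fun x => diagSign n (φ₂ x)) ∧
      ∀ c : ℤ,
        {x : Fin 3 → ZMod 2 | (diagSign n (φ₁ x)).trace = (c : ℂ)}.ncard =
        {x : Fin 3 → ZMod 2 | (diagSign n (φ₂ x)).trace = (c : ℂ)}.ncard := by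
  refine ⟨6, φA A1, φA A2, inj1, inj2, ?_, ?_⟩
  · rintro ⟨P, hP⟩
    have hx : ∀ x : Fin 3 → ZMod 2, ∃ y, diagSign 6 (φA A2 y) =
        (P : Matrix (Fin 6) (Fin 6) ℂ) * diagSign 6 (φA A1 x) * ((P⁻¹ : (Matrix (Fin 6) (Fin 6) ℂ)ˣ) : Matrix (Fin 6) (Fin 6) ℂ) := by
      intro x
      have hmem : ((P : Matrix (Fin 6) (Fin 6) ℂ) * diagSign 6 (φA A1 x) * ((P⁻¹ : (Matrix (Fin 6) (Fin 6) ℂ)ˣ) : Matrix (Fin 6) (Fin 6) ℂ))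
          ∈ Set.range fun y => diagSign 6 (φA A2 y) := by
        rw [← hP]; exact ⟨diagSign 6 (φA A1 x), ⟨x, rfl⟩, rfl⟩
      obtain ⟨y, hy⟩ := hmem
      exact ⟨y, by rw [← hy]⟩
    choose ψ hψ using hx
    have injσ2 : Function.Injective fun y => diagSign 6 (φA A2 y) := by
      intro a b h; exact inj2 (diagSign_inj 6 h)
    have hadd : ∀ u v, ψ (u + v) = ψ u + ψ v := by
      intro u v
      apply injσ2
      show diagSign 6 (φA A2 (ψ (u+v))) = diagSign 6 (φA A2 (ψ u + ψ v))
      calc diagSign 6 (φA A2 (ψ (u+v)))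
          = (P : Matrix (Fin 6) (Fin 6) ℂ) * diagSign 6 (φA A1 (u+v)) * ((P⁻¹ : (Matrix (Fin 6) (Fin 6) ℂ)ˣ) : Matrix (Fin 6) (Fin 6) ℂ) := hψ _
        _ = ((P : Matrix (Fin 6) (Fin 6) ℂ) * diagSign 6 (φA A1 u) * ((P⁻¹ : (Matrix (Fin 6) (Fin 6) ℂ)ˣ) : Matrix (Fin 6) (Fin 6) ℂ)) *
            ((P : Matrix (Fin 6) (Fin 6) ℂ) * diagSign 6 (φA A1 v) * ((P⁻¹ : (Matrix (Fin 6) (Fin 6) ℂ)ˣ) : Matrix (Fin 6) (Fin 6) ℂ)) := by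
            rw [map_add, diagSign_add]
            simp only [mul_assoc, Units.inv_mul_cancel_left]
        _ = diagSign 6 (φA A2 (ψ u)) * diagSign 6 (φA A2 (ψ v)) := by rw [hψ, hψ]
        _ = diagSign 6 (φA A2 (ψ u + ψ v)) := by rw [map_add, diagSign_add]
    have htr : ∀ x, wt (φA A2 (ψ x)) = wt (φA A1 x) := by
      intro x
      have h := congrArg Matrix.trace (hψ x)
      rw [Matrix.trace_mul_comm, Units.inv_mul_cancel_left] at h
      rw [trace_diagSign, trace_diagSign] at h
      have hC : (wt (φA A2 (ψ x)) : ℂ) = (wt (φA A1 x) : ℂ) := by linear_combination -h/2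
      exact_mod_cast hC
    have h0 : ψ 0 = 0 := by
      have h00 : ψ 0 + 0 = ψ 0 + ψ 0 := by rw [add_zero, ← hadd, add_zero]
      exact (add_left_cancel h00).symm
    have hsmul : ∀ (c : ZMod 2) (v : Fin 3 → ZMod 2), ψ (c • v) = c • ψ v := by
      intro c v
      rcases (by decide : ∀ a : ZMod 2, a = 0 ∨ a = 1) c with rfl | rfl
      · simp [h0]
      · simp
    have hψdef : ∀ x : Fin 3 → ZMod 2,
        ψ x = x 0 • ψ ![1,0,0] + x 1 • ψ ![0,1,0] + x 2 • ψ ![0,0,1] := by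
      intro x
      conv_lhs => rw [decomp x]
      rw [hadd, hadd, hsmul, hsmul, hsmul]
    refine no_linear_iso ⟨ψ ![1,0,0], ψ ![0,1,0], ψ ![0,0,1], fun x => ?_⟩
    have := htr x
    rw [hψdef x] at this
    exact this
  · intro c
    set e := Equiv.swap (![0,1,1] : Fin 3 → ZMod 2) ![1,1,1] with he
    have hw : ∀ x, wt (φA A2 (e x)) = wt (φA A1 x) := wt_swap
    have hset : {x : Fin 3 → ZMod 2 | (diagSign 6 (φA A2 x)).trace = (c:ℂ)}
        = e '' {x : Fin 3 → ZMod 2 | (diagSign 6 (φA A1 x)).trace = (c:ℂ)} := by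
      ext y
      simp only [Set.mem_image, Set.mem_setOf_eq]
      constructor
      · intro hy
        refine ⟨e.symm y, ?_, e.apply_symm_apply y⟩
        have h1 := hw (e.symm y)
        rw [e.apply_symm_apply] at h1
        rw [trace_diagSign] at hy ⊢
        rw [← h1]; exact hy
      · rintro ⟨x, hx, rfl⟩
        rw [trace_diagSign] at hx ⊢
        rw [hw x]; exact hx
    rw [hset, Set.ncard_image_of_injective _ e.injective]
end
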